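/- Define N_0 = I ∈ M_{ns} and N_ν = N_{ν−1}·F + (I_n ⊗ A_ν) for ν = 1,…,n−1, where F is the lower block Frobenius matrix with last block row [−A_n,…,−A_1]. Then for every block matrix D ∈ M_{ns} whose first p−1 block rows and last n−p block columns are zero, SP_s(𝒥^ν P D) = SP_s(N_ν D) for all ν = 0,…,n−1. -/

import Mathlib

open Matrix Kronecker

/-- The block of a block matrix with `s×s` blocks. -/
def blk {K : Type*} [Field K] {q r s : ℕ}
    (M : Matrix (Fin q × Fin s) (Fin r × Fin s) K) (i : Fin q) (j : Fin r) :
    Matrix (Fin s) (Fin s) K := fun a b => M (i, a) (j, b)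

/-- The block trace `SP_s`. -/
def SP {K : Type*} [Field K] {n s : ℕ}
    (M : Matrix (Fin n × Fin s) (Fin n × Fin s) K) : Matrix (Fin s) (Fin s) K :=
  ∑ i, blk M i i

/-- The `n×n` shift matrix `J` (ones on the superdiagonal). -/
def shiftJ (K : Type*) [Field K] (n : ℕ) : Matrix (Fin n) (Fin n) K :=
  fun i j => if (j : ℕ) = (i : ℕ) + 1 then 1 else 0

/-- The lower block Frobenius (block companion) matrix of the matrix polynomial
`λⁿ I + A 1 λ^{n-1} + … + A n`: identity blocks on the block superdiagonal, zeros
elsewhere in the first `n-1` block rows, last block row `[-A n, …, -A 1]`. -/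
def frob {K : Type*} [Field K] (n s : ℕ) (A : ℕ → Matrix (Fin s) (Fin s) K) :
    Matrix (Fin n × Fin s) (Fin n × Fin s) K :=
  fun p c =>
    if (p.1 : ℕ) + 1 < n then
      (if (c.1 : ℕ) = (p.1 : ℕ) + 1 then (1 : Matrix (Fin s) (Fin s) K) else 0) p.2 c.2
    else (-(A (n - (c.1 : ℕ)))) p.2 c.2

/-- The lower block triangular block Toeplitz matrix `P` with blocks `A (i - j)`
on and below the block diagonal (`A 0 = I`). -/
def toep {K : Type*} [Field K] (n s : ℕ) (A : ℕ → Matrix (Fin s) (Fin s) K) :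
    Matrix (Fin n × Fin s) (Fin n × Fin s) K :=
  fun p c => if (c.1 : ℕ) ≤ (p.1 : ℕ) then (A ((p.1 : ℕ) - (c.1 : ℕ))) p.2 c.2 else 0

/-- `N 0 = I`, `N (ν+1) = N ν · F + Iₙ ⊗ A (ν+1)`. -/
def Nmat {K : Type*} [Field K] {n s : ℕ}
    (F : Matrix (Fin n × Fin s) (Fin n × Fin s) K)
    (A : ℕ → Matrix (Fin s) (Fin s) K) : ℕ → Matrix (Fin n × Fin s) (Fin n × Fin s) K
  | 0 => 1
  | ν + 1 => Nmat F A ν * F + (1 : Matrix (Fin n) (Fin n) K) ⊗ₖ A (ν + 1)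

/-!
Block by block, `N_ν` agrees with `𝒥^ν P` on and above the block diagonal. Right multiplication
by `F` shifts the block columns one step to the right and subtracts `(last block column) · A_{n-j}`
from block column `j`; with `A_0 = I` an induction on `ν < n` then gives the closed form
`N_ν(i,j) = [i+ν < n, j ≤ i+ν] A_{i+ν-j} - [i+ν-n ≤ j < i] A_{i+ν-j}`, whose first term is the
`(i,j)` block of `𝒥^ν P` and whose second is strictly block lower triangular. The hypotheses on
`D` make it block lower triangular, and `SP_s(M D)` only involves the blocks `M(i,k)`, `i ≤ k`.
-/

section Blocks

variable {K : Type*} [Field K] {s n : ℕ}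

lemma blk_mul (M N : Matrix (Fin n × Fin s) (Fin n × Fin s) K) (i j : Fin n) :
    blk (M * N) i j = ∑ k, blk M i k * blk N k j := by
  ext a b
  simp [blk, mul_apply, Matrix.sum_apply, Fintype.sum_prod_type]

lemma blk_add (M N : Matrix (Fin n × Fin s) (Fin n × Fin s) K) (i j : Fin n) :
    blk (M + N) i j = blk M i j + blk N i j := rfl

lemma blk_one (i j : Fin n) :
    blk (1 : Matrix (Fin n × Fin s) (Fin n × Fin s) K) i j = if i = j then 1 else 0 := by
  ext a b
  by_cases h : i = j <;> simp [blk, one_apply, h]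

lemma blk_kronecker (X : Matrix (Fin n) (Fin n) K) (B : Matrix (Fin s) (Fin s) K) (i j : Fin n) :
    blk (X ⊗ₖ B) i j = X i j • B := by
  ext a b; simp [blk, kroneckerMap_apply]

lemma SP_mul (M D : Matrix (Fin n × Fin s) (Fin n × Fin s) K) :
    SP (M * D) = ∑ i, ∑ k, blk M i k * blk D k i :=
  Finset.sum_congr rfl fun i _ => blk_mul M D i i

lemma SP_mul_congr_of_blockLowerTriangular {M M' D : Matrix (Fin n × Fin s) (Fin n × Fin s) K}
    (hM : ∀ i k : Fin n, i ≤ k → blk M i k = blk M' i k)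
    (hD : ∀ i k : Fin n, k < i → blk D k i = 0) :
    SP (M * D) = SP (M' * D) := by
  rw [SP_mul, SP_mul]
  refine Finset.sum_congr rfl fun i _ => Finset.sum_congr rfl fun k _ => ?_
  rcases le_or_gt i k with h | h
  · rw [hM i k h]
  · rw [hD i k h, mul_zero, mul_zero]

lemma blk_shiftJ_kronecker_mul (M : Matrix (Fin n × Fin s) (Fin n × Fin s) K) (i k : Fin n) :
    blk ((shiftJ K n ⊗ₖ (1 : Matrix (Fin s) (Fin s) K)) * M) i k =
      if h : (i : ℕ) + 1 < n then blk M ⟨i + 1, h⟩ k else 0 := by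
  rw [blk_mul]
  simp only [blk_kronecker, shiftJ, ite_smul, one_smul, zero_smul, ite_mul, one_mul, zero_mul]
  split_ifs with h
  · rw [Finset.sum_eq_single ⟨i + 1, h⟩] <;> simp +contextual [Fin.ext_iff]
  · exact Finset.sum_eq_zero fun m _ => if_neg (by omega)

lemma blk_shiftJ_pow_kronecker_mul (ν : ℕ) (M : Matrix (Fin n × Fin s) (Fin n × Fin s) K)
    (i k : Fin n) :
    blk ((shiftJ K n ⊗ₖ (1 : Matrix (Fin s) (Fin s) K)) ^ ν * M) i k =
      if h : (i : ℕ) + ν < n then blk M ⟨i + ν, h⟩ k else 0 := by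
  induction ν generalizing i with
  | zero => simp
  | succ ν ih =>
    rw [pow_succ', mul_assoc, blk_shiftJ_kronecker_mul]
    split_ifs with h h'
    · rw [ih, dif_pos (by simpa [add_right_comm, add_assoc] using h')]
      simp only [add_assoc, add_comm 1 ν]
    · rw [ih, dif_neg (by simpa [add_assoc, add_comm 1 ν] using h')]
    · omega
    · rfl

end Blocks

section Companion

variable {K : Type*} [Field K] {s n : ℕ} (A : ℕ → Matrix (Fin s) (Fin s) K)

lemma blk_toep (i k : Fin n) :
    blk (toep n s A) i k = if (k : ℕ) ≤ i then A (i - k) else 0 := by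
  ext a b
  by_cases h : (k : ℕ) ≤ i <;> simp [blk, toep, h]

lemma blk_frob (k j : Fin n) :
    blk (frob n s A) k j =
      if (k : ℕ) + 1 < n then (if (j : ℕ) = k + 1 then 1 else 0) else -A (n - j) := by
  ext a b
  simp only [blk, frob]
  split_ifs <;> rfl

lemma blk_mul_frob {M : Matrix (Fin n × Fin s) (Fin n × Fin s) K}
    {i : Fin n} {f : ℕ → Matrix (Fin s) (Fin s) K} (hf : ∀ k : Fin n, blk M i k = f k)
    (j : Fin n) :
    blk (M * frob n s A) i j = (if 1 ≤ (j : ℕ) then f (j - 1) else 0) - f (n - 1) * A (n - j) := by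
  obtain ⟨m, rfl⟩ : ∃ m, n = m + 1 := ⟨n - 1, by have := j.isLt; omega⟩
  simp only [blk_mul, hf, Fin.sum_univ_castSucc, blk_frob, Fin.val_castSucc, Fin.val_last,
    add_lt_add_iff_right, Fin.is_lt, if_true, lt_irrefl, if_false, mul_ite, mul_one, mul_zero,
    add_tsub_cancel_right, mul_neg, sub_eq_add_neg]
  congr 1
  rw [Fin.sum_univ_eq_sum_range (fun k => if (j : ℕ) = k + 1 then f k else 0)]
  split_ifs with hj
  · rw [Finset.sum_eq_single ((j : ℕ) - 1)] <;> grind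
  · exact Finset.sum_eq_zero fun k _ => if_neg (by omega)

def shiftToepBlock (n ν i j : ℕ) : Matrix (Fin s) (Fin s) K :=
  if i + ν < n ∧ j ≤ i + ν then A (i + ν - j) else 0

lemma blk_shiftJ_pow_kronecker_mul_toep (ν : ℕ) (i j : Fin n) :
    blk ((shiftJ K n ⊗ₖ (1 : Matrix (Fin s) (Fin s) K)) ^ ν * toep n s A) i j =
      shiftToepBlock A n ν i j := by
  rw [blk_shiftJ_pow_kronecker_mul, shiftToepBlock]
  split_ifs <;> simp_all [blk_toep]

def nmatBlock (n ν i j : ℕ) : Matrix (Fin s) (Fin s) K :=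
  shiftToepBlock A n ν i j - if i + ν ≤ j + n ∧ j < i then A (i + ν - j) else 0

lemma nmatBlock_last (hA0 : A 0 = 1) {ν i : ℕ} (hi : i < n) :
    nmatBlock A n ν i (n - 1) = if i + ν = n - 1 then 1 else 0 := by
  simp only [nmatBlock, shiftToepBlock]
  grind

lemma blk_Nmat_frob (hA0 : A 0 = 1) {ν : ℕ} (hν : ν < n) (i j : Fin n) :
    blk (Nmat (frob n s A) A ν) i j = nmatBlock A n ν i j := by
  induction ν generalizing j with
  | zero =>
    simp only [Nmat, blk_one, nmatBlock, shiftToepBlock, Fin.ext_iff]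
    grind
  | succ ν ih =>
    rw [Nmat, blk_add, blk_mul_frob A (ih (by omega)), blk_kronecker, one_apply, ite_smul,
      one_smul, zero_smul, nmatBlock_last A hA0 i.isLt, ite_mul, one_mul, zero_mul]
    simp only [nmatBlock, shiftToepBlock, Fin.ext_iff]
    grind

end Companion

theorem stmt12_general {K : Type*} [Field K] {s n p : ℕ}
    (A : ℕ → Matrix (Fin s) (Fin s) K) (hA0 : A 0 = 1)
    (D : Matrix (Fin n × Fin s) (Fin n × Fin s) K)
    (hDrows : ∀ i j : Fin n, (i : ℕ) + 1 < p → blk D i j = 0)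
    (hDcols : ∀ i j : Fin n, p ≤ (j : ℕ) → blk D i j = 0)
    (ν : ℕ) (hν : ν < n) :
    SP ((shiftJ K n ⊗ₖ (1 : Matrix (Fin s) (Fin s) K)) ^ ν * (toep n s A * D)) =
      SP (Nmat (frob n s A) A ν * D) := by
  have hD : ∀ i k : Fin n, k < i → blk D k i = 0 := fun i k hki =>
    if hpi : p ≤ (i : ℕ) then hDcols k i hpi else hDrows k i (by omega)
  rw [← mul_assoc]
  refine SP_mul_congr_of_blockLowerTriangular (fun i k hik => ?_) hD
  rw [blk_shiftJ_pow_kronecker_mul_toep, blk_Nmat_frob A hA0 hν, nmatBlock,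
    if_neg fun h => (Fin.lt_def.mp h.2).not_ge hik, sub_zero]

/-- For every block matrix `D` whose first `p-1` block rows and last `n-p` block
columns are zero, `SP_s(𝒥^ν P D) = SP_s(N_ν D)` for all `ν = 0,…,n-1`. -/
theorem stmt12 {K : Type*} [Field K] {s n p : ℕ} (hp1 : 1 ≤ p) (hpn : p ≤ n)
    (A : ℕ → Matrix (Fin s) (Fin s) K) (hA0 : A 0 = 1)
    (D : Matrix (Fin n × Fin s) (Fin n × Fin s) K)
    (hDrows : ∀ i j : Fin n, (i : ℕ) + 1 < p → blk D i j = 0)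
    (hDcols : ∀ i j : Fin n, p ≤ (j : ℕ) → blk D i j = 0)
    (ν : ℕ) (hν : ν < n) :
    SP ((shiftJ K n ⊗ₖ (1 : Matrix (Fin s) (Fin s) K)) ^ ν * (toep n s A * D)) =
      SP (Nmat (frob n s A) A ν * D) :=
  stmt12_general A hA0 D hDrows hDcols ν hν
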